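/- In a PB instance where every project has unit cost, consider an SRX execution and a group S⊆V. At each step of SRX, the total payment made by the voters of S toward the chosen project is at most 1; moreover, if the chosen project p has positive marginal utility U_i(p)>0 for some voter i∈S, then |(∪_{i∈S} A(i)) ∩ B| increases by exactly one at that step, and if U_i(p)=0 for all i∈S then the voters of S pay nothing at that step. Consequently, if S is T-cohesive with substitutes for T⊆A (so that the initial total budget of S is at least |T|) and all marginal utilities of voters in S are strictly positive on their approved projects, SRX cannot terminate with |(∪_{i∈S} A(i)) ∩ B| < |T|. -/

import Mathlib

open Finset

/-- A voter's preference: a partition of her desired projects into groups of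
substitutes, together with a marginal utility function per group
(`margU g j` is the marginal utility of the `j`-th funded project of group `g`). -/
structure VoterPref (A : Type*) [DecidableEq A] where
  parts : Finset (Finset A)
  margU : Finset A → ℕ → ℝ

namespace VoterPref

variable {A : Type*} [DecidableEq A]

/-- `A(i)` : the set of desired projects of the voter. -/
def desired (v : VoterPref A) : Finset A := v.parts.sup id

/-- Well-formedness: groups are nonempty and pairwise disjoint, and marginal
utilities are nonnegative and nonincreasing. -/
def Valid (v : VoterPref A) : Prop :=
  (∀ g ∈ v.parts, g.Nonempty) ∧
  (∀ g₁ ∈ v.parts, ∀ g₂ ∈ v.parts, g₁ ≠ g₂ → Disjoint g₁ g₂) ∧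
  (∀ g ∈ v.parts, ∀ j : ℕ, 0 ≤ v.margU g j) ∧
  (∀ g ∈ v.parts, ∀ j : ℕ, v.margU g (j + 1) ≤ v.margU g j)

/-- The utility of a bundle `B`:  `u_i(B) = Σ_{g} Σ_{j=1}^{|g∩B|} u_{i,g}(j)`. -/
def util (v : VoterPref A) (B : Finset A) : ℝ :=
  ∑ g ∈ v.parts, ∑ j ∈ Finset.Icc 1 (g ∩ B).card, v.margU g j

/-- Marginal utility of project `p` given the already selected bundle `B`. -/
def margUtil (v : VoterPref A) (B : Finset A) (p : A) : ℝ :=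
  v.util (insert p B) - v.util B

/-- `p₁` and `p₂` are substitutes for the voter. -/
def sameGroup (v : VoterPref A) (p₁ p₂ : A) : Prop :=
  ∃ g ∈ v.parts, p₁ ∈ g ∧ p₂ ∈ g

end VoterPref

/-- A participatory budgeting instance `E = (V, A, cost, L)` together with the
voters' preferences. -/
structure PB (V A : Type*) [DecidableEq A] where
  cost : A → ℝ
  budget : ℝ
  pref : V → VoterPref A

noncomputable section
open scoped Classical

variable {V A : Type*} [Fintype V] [Fintype A] [DecidableEq A]

/-- `S` is `T`-cohesive with substitutes: `S` can afford `T` with its share of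
the budget, every voter in `S` desires every project of `T`, and no two
distinct projects of `T` are substitutes for any voter of `S`. -/
def TCohesiveSub (E : PB V A) (S : Finset V) (T : Finset A) : Prop :=
  (∑ p ∈ T, E.cost p) ≤ (E.budget / (Fintype.card V : ℝ)) * S.card ∧
  (∀ i ∈ S, T ⊆ (E.pref i).desired) ∧
  (∀ i ∈ S, ∀ p₁ ∈ T, ∀ p₂ ∈ T, p₁ ≠ p₂ → ¬ (E.pref i).sameGroup p₁ p₂)

/-- `p` is `q`-affordable given remaining budgets `b` and current utilities `U`. -/
def Affordable (E : PB V A) (U : V → A → ℝ) (b : V → ℝ) (p : A) (q : ℝ) : Prop :=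
  0 ≤ q ∧ E.cost p ≤ ∑ i, min (b i) (U i p * q)

/-- The minimal `q` for which `p` is `q`-affordable (junk value if none exists). -/
def qmin (E : PB V A) (U : V → A → ℝ) (b : V → ℝ) (p : A) : ℝ :=
  sInf {q | Affordable E U b p q}

/-- The set of unselected projects that are `q`-affordable for some `q`. -/
def affordSet (E : PB V A) (U : V → A → ℝ) (b : V → ℝ) (B : Finset A) : Finset A :=
  Finset.univ.filter fun p => p ∉ B ∧ ∃ q, Affordable E U b p q

/-- The project chosen at the current step: among affordable unselected
projects, minimize the minimal `q`, breaking ties by the (lexicographic)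
linear order on `A`; `none` if no project is affordable. -/
def choice [LinearOrder A] (E : PB V A) (U : V → A → ℝ) (b : V → ℝ) (B : Finset A) :
    Option A :=
  if h : (affordSet E U b B).Nonempty then
    some (((affordSet E U b B).filter fun p =>
        qmin E U b p = (affordSet E U b B).inf' h (qmin E U b)).min'
      (by
        obtain ⟨p, hp, hq⟩ := Finset.exists_mem_eq_inf' h (qmin E U b)
        exact ⟨p, Finset.mem_filter.mpr ⟨hp, hq.symm⟩⟩))
  else none

/-- The state (selected bundle, remaining budgets) of the generalized Rule X
after `t` steps, where `Ufun B i p` is the utility voter `i` assigns to project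
`p` when the bundle `B` has already been selected. -/
def state [LinearOrder A] (E : PB V A) (Ufun : Finset A → V → A → ℝ) :
    ℕ → Finset A × (V → ℝ)
  | 0 => (∅, fun _ => E.budget / (Fintype.card V : ℝ))
  | t + 1 =>
    let st := state E Ufun t
    match choice E (Ufun st.1) st.2 st.1 with
    | none => st
    | some p =>
        (insert p st.1,
          fun i => st.2 i - min (st.2 i) (Ufun st.1 i p * qmin E (Ufun st.1) st.2 p))

/-- The output of the generalized Rule X (after `|A|` steps the state is final). -/
def mechOutput [LinearOrder A] (E : PB V A) (Ufun : Finset A → V → A → ℝ) : Finset A :=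
  (state E Ufun (Fintype.card A)).1

/-- SRX uses, at every step, the current marginal utilities. -/
def srxU (E : PB V A) : Finset A → V → A → ℝ := fun B i p => (E.pref i).margUtil B p

/-- The Substitute Rule X mechanism. -/
def SRX [LinearOrder A] (E : PB V A) : Finset A := mechOutput E (srxU E)

/-- Rule X uses, throughout, utility 1 for every desired project. -/
def rxU (E : PB V A) : Finset A → V → A → ℝ :=
  fun _ i p => if p ∈ (E.pref i).desired then 1 else 0

/-- The (original) Rule X mechanism. -/
def RX [LinearOrder A] (E : PB V A) : Finset A := mechOutput E (rxU E)

/-- Global substitutes: all voters share one common partition `P` of the whole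
project set, each voter approving a sub-collection of its groups. -/
def GlobalSubs (E : PB V A) (P : Finset (Finset A)) : Prop :=
  (∀ g ∈ P, g.Nonempty) ∧
  (∀ g₁ ∈ P, ∀ g₂ ∈ P, g₁ ≠ g₂ → Disjoint g₁ g₂) ∧
  P.sup id = Finset.univ ∧
  (∀ i : V, (E.pref i).parts ⊆ P)

end

/-
Under unit costs the rule never charges more than one unit per step, and a voter who gains nothing
from the chosen project pays nothing. Hence the potential "remaining budget of `S` plus the number of
selected projects that some voter of `S` desires" never decreases. If `S` is `T`-cohesive and fewer
than `|T|` of its desired projects are selected, the potential shows that `S` still holds at least one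
unit, which suffices to buy an unselected project of `T` at a finite price, since every voter of `S`
values it positively. So SRX keeps selecting projects until `|T|` projects desired by `S` are funded
or all projects are selected.
-/

namespace VoterPref

variable {A : Type*} [DecidableEq A]

theorem margUtil_of_notMem_desired (v : VoterPref A) {B : Finset A} {p : A}
    (hp : p ∉ v.desired) : v.margUtil B p = 0 := by
  have hB : ∀ g ∈ v.parts, g ∩ insert p B = g ∩ B := fun g hg =>
    inter_insert_of_notMem fun hpg => hp (mem_sup.mpr ⟨g, hg, hpg⟩)
  rw [margUtil, util, util, sum_congr rfl fun g hg => by rw [hB g hg], sub_self]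

theorem margUtil_of_mem_parts (v : VoterPref A) (hv : v.Valid) {B g : Finset A} {p : A}
    (hg : g ∈ v.parts) (hpg : p ∈ g) (hpB : p ∉ B) :
    v.margUtil B p = v.margU g ((g ∩ B).card + 1) := by
  rw [margUtil, util, util, ← sum_sub_distrib, sum_eq_single_of_mem g hg]
  · rw [inter_insert_of_mem hpg, card_insert_of_notMem fun h => hpB (mem_inter.mp h).2,
      sum_Icc_succ_top (Nat.le_add_left 1 _), add_sub_cancel_left]
  · intro g' hg' hne
    rw [inter_insert_of_notMem fun hpg' => disjoint_left.mp (hv.2.1 g' hg' g hg hne) hpg' hpg,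
      sub_self]

theorem margUtil_nonneg (v : VoterPref A) (hv : v.Valid) (B : Finset A) (p : A) :
    0 ≤ v.margUtil B p := by
  by_cases hpB : p ∈ B
  · rw [margUtil, insert_eq_self.mpr hpB, sub_self]
  by_cases hp : p ∈ v.desired
  · obtain ⟨g, hg, hpg⟩ := mem_sup.mp hp
    rw [margUtil_of_mem_parts v hv hg hpg hpB]
    exact hv.2.2.1 g hg _
  · rw [margUtil_of_notMem_desired v hp]

theorem margUtil_pos (v : VoterPref A) (hv : v.Valid)
    (hpos : ∀ g ∈ v.parts, ∀ k : ℕ, 0 < v.margU g k)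
    {B : Finset A} {p : A} (hp : p ∈ v.desired) (hpB : p ∉ B) :
    0 < v.margUtil B p := by
  obtain ⟨g, hg, hpg⟩ := mem_sup.mp hp
  rw [margUtil_of_mem_parts v hv hg hpg hpB]
  exact hpos g hg _

theorem mem_desired_of_margUtil_pos (v : VoterPref A) {B : Finset A} {p : A}
    (h : 0 < v.margUtil B p) : p ∈ v.desired := by
  by_contra hp
  exact h.ne' (margUtil_of_notMem_desired v hp)

end VoterPref

theorem continuous_sum_min_mul {ι : Type*} [Fintype ι] (b u : ι → ℝ) :
    Continuous fun q : ℝ => ∑ i, min (b i) (u i * q) :=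
  continuous_finsetSum _ fun _ _ => continuous_const.min (continuous_const.mul continuous_id)

section Affordability

variable {V A : Type*} [Fintype V] [DecidableEq A]
  (E : PB V A) (U : V → A → ℝ) (b : V → ℝ) (p : A)

theorem bddBelow_affordable : BddBelow {q | Affordable E U b p q} :=
  ⟨0, fun _ hq => hq.1⟩

theorem isClosed_affordable : IsClosed {q | Affordable E U b p q} :=
  isClosed_Ici.inter (isClosed_Ici.preimage (continuous_sum_min_mul b fun i => U i p))

theorem affordable_qmin (h : ∃ q, Affordable E U b p q) : Affordable E U b p (qmin E U b p) :=
  (isClosed_affordable E U b p).csInf_mem h (bddBelow_affordable E U b p)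

variable {E U b p}

theorem qmin_pos (hb : ∀ i, 0 ≤ b i) (hcost : 0 < E.cost p) (h : ∃ q, Affordable E U b p q) :
    0 < qmin E U b p := by
  obtain ⟨hq, hpay⟩ := affordable_qmin E U b p h
  refine hq.lt_of_ne fun h0 => ?_
  rw [← h0] at hpay
  simp only [mul_zero, min_eq_right (hb _), sum_const_zero] at hpay
  exact hcost.not_ge hpay

/-- At the least price the voters pay no more than the cost: were the total strictly larger, by
continuity a slightly smaller (still positive) price would also cover the cost. -/
theorem sum_min_qmin_le_cost (hb : ∀ i, 0 ≤ b i) (hcost : 0 < E.cost p)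
    (h : ∃ q, Affordable E U b p q) :
    ∑ i, min (b i) (U i p * qmin E U b p) ≤ E.cost p := by
  by_contra! hlt
  have hnear : ∀ᶠ q in nhds (qmin E U b p), E.cost p < ∑ i, min (b i) (U i p * q) :=
    continuousAt_const.eventually_lt (continuous_sum_min_mul b fun i => U i p).continuousAt hlt
  have hbelow : ∀ᶠ q in nhdsWithin (qmin E U b p) (Set.Iio (qmin E U b p)),
      q ∈ Set.Ioo 0 (qmin E U b p) ∧ E.cost p < ∑ i, min (b i) (U i p * q) :=
    Filter.Eventually.and (Ioo_mem_nhdsLT (qmin_pos hb hcost h)) (nhdsWithin_le_nhds hnear)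
  obtain ⟨q, ⟨hq0, hqlt⟩, hq⟩ := hbelow.exists
  exact hqlt.not_ge (csInf_le (bddBelow_affordable E U b p) ⟨hq0.le, hq.le⟩)

/-- At the price `q = ∑ i ∈ S, b i / U i p` every member of `S` pays her whole budget. -/
theorem exists_affordable_of_cost_le_sum {S : Finset V} (hb : ∀ i, 0 ≤ b i)
    (hU : ∀ i, 0 ≤ U i p) (hpos : ∀ i ∈ S, 0 < U i p) (hcost : E.cost p ≤ ∑ i ∈ S, b i) :
    ∃ q, Affordable E U b p q := by
  set q := ∑ i ∈ S, b i / U i p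
  have hq : 0 ≤ q := sum_nonneg fun i hi => div_nonneg (hb i) (hpos i hi).le
  have hpays : ∀ i ∈ S, min (b i) (U i p * q) = b i := fun i hi =>
    min_eq_left <| (div_le_iff₀' (hpos i hi)).mp <|
      single_le_sum (fun j hj => div_nonneg (hb j) (hpos j hj).le) hi
  refine ⟨q, hq, ?_⟩
  calc E.cost p ≤ ∑ i ∈ S, b i := hcost
    _ = ∑ i ∈ S, min (b i) (U i p * q) := (sum_congr rfl hpays).symm
    _ ≤ ∑ i, min (b i) (U i p * q) :=
      sum_le_sum_of_subset_of_nonneg (subset_univ S) fun i _ _ =>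
        le_min (hb i) (mul_nonneg (hU i) hq)

variable [Fintype A] [LinearOrder A] {B : Finset A}

theorem choice_spec (h : choice E U b B = some p) : p ∉ B ∧ ∃ q, Affordable E U b p q := by
  rw [choice] at h
  split_ifs at h
  have hmem : p ∈ affordSet E U b B := by
    rw [← Option.some.inj h]
    exact mem_of_mem_filter _ (min'_mem _ _)
  simpa only [affordSet, mem_filter, mem_univ, true_and] using hmem

theorem exists_choice_eq_some {q : ℝ} (hpB : p ∉ B) (hq : Affordable E U b p q) :
    ∃ p', choice E U b B = some p' := by
  have hne : (affordSet E U b B).Nonempty := ⟨p, by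
    simp only [affordSet, mem_filter, mem_univ, true_and]
    exact ⟨hpB, q, hq⟩⟩
  rw [choice, dif_pos hne]
  exact ⟨_, rfl⟩

end Affordability

section State

variable {V A : Type*} [Fintype V] [Fintype A] [DecidableEq A] [LinearOrder A]
  (E : PB V A) (Uf : Finset A → V → A → ℝ) {t : ℕ} {p : A}

theorem state_succ_of_choice_eq_none
    (h : choice E (Uf (state E Uf t).1) (state E Uf t).2 (state E Uf t).1 = none) :
    state E Uf (t + 1) = state E Uf t := by
  simp only [state, h]

theorem state_succ_of_choice_eq_some
    (h : choice E (Uf (state E Uf t).1) (state E Uf t).2 (state E Uf t).1 = some p) :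
    state E Uf (t + 1) =
      (insert p (state E Uf t).1,
        fun i => (state E Uf t).2 i -
          min ((state E Uf t).2 i)
            (Uf (state E Uf t).1 i p * qmin E (Uf (state E Uf t).1) (state E Uf t).2 p)) := by
  simp only [state, h]

theorem state_fst_subset_succ (t : ℕ) : (state E Uf t).1 ⊆ (state E Uf (t + 1)).1 := by
  cases h : choice E (Uf (state E Uf t).1) (state E Uf t).2 (state E Uf t).1 with
  | none => rw [state_succ_of_choice_eq_none E Uf h]
  | some p => rw [state_succ_of_choice_eq_some E Uf h]; exact subset_insert _ _

variable {E Uf}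

theorem state_snd_nonneg (hL : 0 ≤ E.budget) (t : ℕ) (i : V) : 0 ≤ (state E Uf t).2 i := by
  induction t with
  | zero => exact div_nonneg hL (Nat.cast_nonneg _)
  | succ t ih =>
    cases h : choice E (Uf (state E Uf t).1) (state E Uf t).2 (state E Uf t).1 with
    | none => rwa [state_succ_of_choice_eq_none E Uf h]
    | some p =>
      rw [state_succ_of_choice_eq_some E Uf h]
      exact sub_nonneg.mpr (min_le_left _ _)

theorem state_payment_eq
    (h : choice E (Uf (state E Uf t).1) (state E Uf t).2 (state E Uf t).1 = some p) (i : V) :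
    (state E Uf t).2 i - (state E Uf (t + 1)).2 i =
      min ((state E Uf t).2 i)
        (Uf (state E Uf t).1 i p * qmin E (Uf (state E Uf t).1) (state E Uf t).2 p) := by
  rw [state_succ_of_choice_eq_some E Uf h, sub_sub_cancel]

theorem state_payment_nonneg (hL : 0 ≤ E.budget) (hUf : ∀ B i p, 0 ≤ Uf B i p)
    (h : choice E (Uf (state E Uf t).1) (state E Uf t).2 (state E Uf t).1 = some p) (i : V) :
    0 ≤ (state E Uf t).2 i - (state E Uf (t + 1)).2 i := by
  rw [state_payment_eq h]
  exact le_min (state_snd_nonneg hL t i)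
    (mul_nonneg (hUf _ i p) (affordable_qmin E _ _ p (choice_spec h).2).1)

theorem sum_state_payment_le_cost (hL : 0 ≤ E.budget) (hUf : ∀ B i p, 0 ≤ Uf B i p)
    (hcost : 0 < E.cost p)
    (h : choice E (Uf (state E Uf t).1) (state E Uf t).2 (state E Uf t).1 = some p)
    (S : Finset V) :
    ∑ i ∈ S, ((state E Uf t).2 i - (state E Uf (t + 1)).2 i) ≤ E.cost p :=
  calc ∑ i ∈ S, ((state E Uf t).2 i - (state E Uf (t + 1)).2 i)
      ≤ ∑ i, ((state E Uf t).2 i - (state E Uf (t + 1)).2 i) :=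
        sum_le_sum_of_subset_of_nonneg (subset_univ S) fun i _ _ =>
          state_payment_nonneg hL hUf h i
    _ = ∑ i, min ((state E Uf t).2 i)
          (Uf (state E Uf t).1 i p * qmin E (Uf (state E Uf t).1) (state E Uf t).2 p) :=
        sum_congr rfl fun i _ => state_payment_eq h i
    _ ≤ E.cost p := sum_min_qmin_le_cost (state_snd_nonneg hL t) hcost (choice_spec h).2

theorem state_snd_succ_of_utility_eq_zero (hL : 0 ≤ E.budget)
    (h : choice E (Uf (state E Uf t).1) (state E Uf t).2 (state E Uf t).1 = some p) {i : V}
    (hi : Uf (state E Uf t).1 i p = 0) :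
    (state E Uf (t + 1)).2 i = (state E Uf t).2 i := by
  have hpay := state_payment_eq h i
  rw [hi, zero_mul, min_eq_right (state_snd_nonneg hL t i)] at hpay
  exact (sub_eq_zero.mp hpay).symm

theorem card_inter_state_succ_of_mem
    (h : choice E (Uf (state E Uf t).1) (state E Uf t).2 (state E Uf t).1 = some p)
    {X : Finset A} (hpX : p ∈ X) :
    (X ∩ (state E Uf (t + 1)).1).card = (X ∩ (state E Uf t).1).card + 1 := by
  rw [state_succ_of_choice_eq_some E Uf h, inter_insert_of_mem hpX,
    card_insert_of_notMem fun hp => (choice_spec h).1 (mem_inter.mp hp).2]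

theorem inter_state_succ_of_notMem
    (h : choice E (Uf (state E Uf t).1) (state E Uf t).2 (state E Uf t).1 = some p)
    {X : Finset A} (hpX : p ∉ X) :
    X ∩ (state E Uf (t + 1)).1 = X ∩ (state E Uf t).1 := by
  rw [state_succ_of_choice_eq_some E Uf h, inter_insert_of_notMem hpX]

theorem le_card_inter_state_or_card_state_eq {X : Finset A} {k : ℕ}
    (hprog : ∀ t, (X ∩ (state E Uf t).1).card < k →
      choice E (Uf (state E Uf t).1) (state E Uf t).2 (state E Uf t).1 ≠ none) (t : ℕ) :
    k ≤ (X ∩ (state E Uf t).1).card ∨ (state E Uf t).1.card = t := by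
  induction t with
  | zero => exact Or.inr rfl
  | succ t ih =>
    have hmono : (X ∩ (state E Uf t).1).card ≤ (X ∩ (state E Uf (t + 1)).1).card :=
      card_le_card (inter_subset_inter_left (state_fst_subset_succ E Uf t))
    by_cases hk : k ≤ (X ∩ (state E Uf t).1).card
    · exact Or.inl (hk.trans hmono)
    obtain ⟨p, hp⟩ := Option.ne_none_iff_exists'.mp (hprog t (not_le.mp hk))
    rw [state_succ_of_choice_eq_some E Uf hp, card_insert_of_notMem (choice_spec hp).1,
      ih.resolve_left hk]
    exact Or.inr rfl

/-- `mechOutput` runs `|A|` steps, after which a rule that never stalled has selected every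
project. -/
theorem le_card_inter_mechOutput {X : Finset A} {k : ℕ} (hk : k ≤ X.card)
    (hprog : ∀ t, (X ∩ (state E Uf t).1).card < k →
      choice E (Uf (state E Uf t).1) (state E Uf t).2 (state E Uf t).1 ≠ none) :
    k ≤ (X ∩ mechOutput E Uf).card := by
  rcases le_card_inter_state_or_card_state_eq hprog (Fintype.card A) with hle | hcard
  · exact hle
  · rwa [mechOutput, eq_univ_of_card _ hcard, inter_univ]

end State

section SRX

variable {V A : Type*} [DecidableEq A] {E : PB V A}

theorem srxU_nonneg (hvalid : ∀ i, (E.pref i).Valid) (B : Finset A) (i : V) (p : A) :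
    0 ≤ srxU E B i p :=
  (E.pref i).margUtil_nonneg (hvalid i) B p

variable [Fintype V] [Fintype A] [LinearOrder A]

theorem srx_share_le_sum_state_add_card (hL : 0 ≤ E.budget) (hunit : ∀ p, E.cost p = 1)
    (hvalid : ∀ i, (E.pref i).Valid) (S : Finset V) (t : ℕ) :
    (S.card : ℝ) * (E.budget / Fintype.card V) ≤
      ∑ i ∈ S, (state E (srxU E) t).2 i +
        ((S.biUnion fun i => (E.pref i).desired) ∩ (state E (srxU E) t).1).card := by
  induction t with
  | zero => simp [state]
  | succ t ih =>
    cases h : choice E (srxU E (state E (srxU E) t).1) (state E (srxU E) t).2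
        (state E (srxU E) t).1 with
    | none => rwa [state_succ_of_choice_eq_none E _ h]
    | some p =>
      have hsum : ∑ i ∈ S, (state E (srxU E) (t + 1)).2 i = ∑ i ∈ S, (state E (srxU E) t).2 i -
          ∑ i ∈ S, ((state E (srxU E) t).2 i - (state E (srxU E) (t + 1)).2 i) := by
        rw [sum_sub_distrib, sub_sub_cancel]
      by_cases hpX : p ∈ S.biUnion fun i => (E.pref i).desired
      · have hpay := sum_state_payment_le_cost hL (srxU_nonneg hvalid) (by simp [hunit]) h S
        rw [hsum, card_inter_state_succ_of_mem h hpX]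
        rw [hunit] at hpay
        push_cast
        linarith
      · have hfree : ∀ i ∈ S, (state E (srxU E) (t + 1)).2 i = (state E (srxU E) t).2 i :=
          fun i hi => state_snd_succ_of_utility_eq_zero hL h <|
            VoterPref.margUtil_of_notMem_desired _ fun hp => hpX (mem_biUnion.mpr ⟨i, hi, hp⟩)
        rwa [sum_congr rfl hfree, inter_state_succ_of_notMem h hpX]

theorem srx_choice_ne_none_of_cohesive (hL : 0 ≤ E.budget) (hunit : ∀ p, E.cost p = 1)
    (hvalid : ∀ i, (E.pref i).Valid) {S : Finset V} {T : Finset A} (hcoh : TCohesiveSub E S T)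
    (hpos : ∀ i ∈ S, ∀ g ∈ (E.pref i).parts, ∀ k : ℕ, 0 < (E.pref i).margU g k) {t : ℕ}
    (hlt : ((S.biUnion fun i => (E.pref i).desired) ∩ (state E (srxU E) t).1).card < T.card) :
    choice E (srxU E (state E (srxU E) t).1) (state E (srxU E) t).2 (state E (srxU E) t).1 ≠
      none := by
  have hT : (T.card : ℝ) ≤ E.budget / Fintype.card V * S.card := by simpa [hunit] using hcoh.1
  have hlt' : (((S.biUnion fun i => (E.pref i).desired) ∩ (state E (srxU E) t).1).card : ℝ) + 1
      ≤ T.card := by exact_mod_cast hlt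
  have hbudgetS : 1 ≤ ∑ i ∈ S, (state E (srxU E) t).2 i := by
    linarith [srx_share_le_sum_state_add_card hL hunit hvalid S t]
  obtain ⟨i₀, hi₀⟩ := nonempty_of_sum_ne_zero (by linarith : ∑ i ∈ S, (state E (srxU E) t).2 i ≠ 0)
  have hTX : T ⊆ S.biUnion fun i => (E.pref i).desired := fun p hp =>
    mem_biUnion.mpr ⟨i₀, hi₀, hcoh.2.1 i₀ hi₀ hp⟩
  obtain ⟨p, hpT, hpB⟩ := not_subset.mp fun hTB =>
    hlt.not_ge (card_le_card (subset_inter hTX hTB))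
  obtain ⟨q, hq⟩ := exists_affordable_of_cost_le_sum (state_snd_nonneg hL t)
    (fun i => srxU_nonneg hvalid _ i p)
    (fun i hi => (E.pref i).margUtil_pos (hvalid i) (hpos i hi) (hcoh.2.1 i hi hpT) hpB)
    (by rwa [hunit])
  obtain ⟨p', hp'⟩ := exists_choice_eq_some hpB hq
  exact hp' ▸ Option.some_ne_none p'

theorem card_le_card_inter_SRX_of_cohesive (hL : 0 ≤ E.budget) (hunit : ∀ p, E.cost p = 1)
    (hvalid : ∀ i, (E.pref i).Valid) {S : Finset V} {T : Finset A} (hcoh : TCohesiveSub E S T)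
    (hpos : ∀ i ∈ S, ∀ g ∈ (E.pref i).parts, ∀ k : ℕ, 0 < (E.pref i).margU g k) :
    T.card ≤ ((S.biUnion fun i => (E.pref i).desired) ∩ SRX E).card := by
  rcases S.eq_empty_or_nonempty with rfl | ⟨i₀, hi₀⟩
  · simpa [hunit] using hcoh.1
  refine le_card_inter_mechOutput (card_le_card fun p hp => ?_)
    fun t => srx_choice_ne_none_of_cohesive hL hunit hvalid hcoh hpos
  exact mem_biUnion.mpr ⟨i₀, hi₀, hcoh.2.1 i₀ hi₀ hp⟩

end SRX

theorem srx_unit_cost_step_payments_general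
    {V A : Type*} [Fintype V] [Fintype A] [DecidableEq A] [LinearOrder A]
    (E : PB V A)
    (hbudget : 0 < E.budget)
    (hunit : ∀ p : A, E.cost p = 1)
    (hvalid : ∀ i : V, (E.pref i).Valid)
    (S : Finset V) :
    (∀ (t : ℕ) (p : A),
      choice E (srxU E (state E (srxU E) t).1) (state E (srxU E) t).2
          (state E (srxU E) t).1 = some p →
        (∑ i ∈ S, ((state E (srxU E) t).2 i - (state E (srxU E) (t + 1)).2 i)) ≤ 1 ∧
        ((∃ i ∈ S, 0 < srxU E (state E (srxU E) t).1 i p) →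
          ((S.biUnion fun i => (E.pref i).desired) ∩ (state E (srxU E) (t + 1)).1).card =
            ((S.biUnion fun i => (E.pref i).desired) ∩ (state E (srxU E) t).1).card + 1) ∧
        ((∀ i ∈ S, srxU E (state E (srxU E) t).1 i p = 0) →
          ∀ i ∈ S, (state E (srxU E) (t + 1)).2 i = (state E (srxU E) t).2 i)) ∧
    (∀ T : Finset A, TCohesiveSub E S T →
      (∀ i ∈ S, ∀ g ∈ (E.pref i).parts, ∀ k : ℕ, 0 < (E.pref i).margU g k) →
      T.card ≤ ((S.biUnion fun i => (E.pref i).desired) ∩ SRX E).card) := by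
  refine ⟨fun t p h => ⟨?_, ?_, ?_⟩, fun T hcoh hpos =>
    card_le_card_inter_SRX_of_cohesive hbudget.le hunit hvalid hcoh hpos⟩
  · rw [← hunit p]
    exact sum_state_payment_le_cost hbudget.le (srxU_nonneg hvalid) (by simp [hunit]) h S
  · rintro ⟨i, hi, hpos⟩
    exact card_inter_state_succ_of_mem h
      (mem_biUnion.mpr ⟨i, hi, VoterPref.mem_desired_of_margUtil_pos _ hpos⟩)
  · exact fun hzero i hi => state_snd_succ_of_utility_eq_zero hbudget.le h (hzero i hi)

/-- Under unit costs, at each step of an SRX execution (states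
`(B_t, b(t)) = state E (srxU E) t`): the total payment of the voters of `S`
toward the chosen project `p` is at most `1`; if `p` has positive marginal
utility for some voter of `S` then `|(∪_{i∈S} A(i)) ∩ B|` increases by exactly
one; and if `p` has zero marginal utility for all voters of `S` then the
voters of `S` pay nothing.  Consequently, if `S` is `T`-cohesive with
substitutes and all marginal utilities of voters in `S` on their approved
groups are strictly positive, SRX cannot terminate with
`|(∪_{i∈S} A(i)) ∩ B| < |T|`. -/
theorem srx_unit_cost_step_payments
    {V A : Type*} [Fintype V] [Fintype A] [DecidableEq A] [LinearOrder A]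
    (E : PB V A) (I : ℝ)
    (hV : 0 < Fintype.card V)
    (hbudget : 0 < E.budget)
    (hunit : ∀ p : A, E.cost p = 1)
    (hvalid : ∀ i : V, (E.pref i).Valid)
    (hI : 0 < I)
    (hfirst : ∀ i : V, ∀ g ∈ (E.pref i).parts, (E.pref i).margU g 1 = I)
    (S : Finset V) :
    (∀ (t : ℕ) (p : A),
      choice E (srxU E (state E (srxU E) t).1) (state E (srxU E) t).2
          (state E (srxU E) t).1 = some p →
        (∑ i ∈ S, ((state E (srxU E) t).2 i - (state E (srxU E) (t + 1)).2 i)) ≤ 1 ∧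
        ((∃ i ∈ S, 0 < srxU E (state E (srxU E) t).1 i p) →
          ((S.biUnion fun i => (E.pref i).desired) ∩ (state E (srxU E) (t + 1)).1).card =
            ((S.biUnion fun i => (E.pref i).desired) ∩ (state E (srxU E) t).1).card + 1) ∧
        ((∀ i ∈ S, srxU E (state E (srxU E) t).1 i p = 0) →
          ∀ i ∈ S, (state E (srxU E) (t + 1)).2 i = (state E (srxU E) t).2 i)) ∧
    (∀ T : Finset A, TCohesiveSub E S T →
      (∀ i ∈ S, ∀ g ∈ (E.pref i).parts, ∀ k : ℕ, 0 < (E.pref i).margU g k) →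
      T.card ≤ ((S.biUnion fun i => (E.pref i).desired) ∩ SRX E).card) :=
  srx_unit_cost_step_payments_general E hbudget hunit hvalid S
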